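/- arXiv:1410.1758 — 2 statements merged into one kernel-verified Lean document; each statement's English description precedes it below -/
import Mathlib

section
/- If a directed multigraph is infinitely connected (strongly connected and remains strongly connected after removal of any finite set of edges), then it is Eulerian in the sense that for any finite set of edges there exists a circuit passing through each of those edges. -/
/-- A directed multigraph. -/
structure MultiDigraph where
  V : Type
  E : Type
  src : E → V
  tgt : E → V

/-- `IsWalk G u es v`: the list of edges `es` forms a walk from `u` to `v`. -/
def MultiDigraph.IsWalk (G : MultiDigraph) : G.V → List G.E → G.V → Prop
  | u, [], v => u = v
  | u, e :: es, v => G.src e = u ∧ G.IsWalk (G.tgt e) es v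

/-- `G` is strongly connected using only edges outside `S`. -/
def MultiDigraph.StronglyConnectedAvoiding (G : MultiDigraph) (S : Set G.E) : Prop :=
  ∀ u v : G.V, ∃ es : List G.E, G.IsWalk u es v ∧ ∀ e ∈ es, e ∉ S

/-- `G` is strongly connected and remains so after removal of any finite set of edges. -/
def MultiDigraph.InfinitelyConnected (G : MultiDigraph) : Prop :=
  G.StronglyConnectedAvoiding ∅ ∧ ∀ S : Set G.E, S.Finite → G.StronglyConnectedAvoiding S

/-- `G` is Eulerian: for every finite set `S` of edges, there is a circuit
(a closed trail, i.e. no edge repeated) passing through each edge of `S`. -/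
def MultiDigraph.IsEulerian (G : MultiDigraph) : Prop :=
  ∀ S : Set G.E, S.Finite →
    ∃ (u : G.V) (es : List G.E), G.IsWalk u es u ∧ es.Nodup ∧ ∀ e ∈ S, e ∈ es


/-!
Grow a trail edge by edge: to add an edge `a` not yet covered, walk from the current endpoint to
the source of `a` while avoiding the finitely many edges already used and `a` itself, then
traverse `a`. Infinite connectivity makes each such detour possible, and a final detour back to
the start, avoiding all edges used so far, closes the trail into a circuit.
-/

namespace MultiDigraph

variable {G : MultiDigraph}

theorem isWalk_append {u v : G.V} {a b : List G.E} :
    G.IsWalk u (a ++ b) v ↔ ∃ m, G.IsWalk u a m ∧ G.IsWalk m b v := by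
  induction a generalizing u with
  | nil => exact ⟨fun hb => ⟨u, rfl, hb⟩, fun ⟨_, hu, hb⟩ => hu ▸ hb⟩
  | cons e a ih =>
    simp only [List.cons_append, IsWalk, ih]
    exact ⟨fun ⟨hs, m, ha, hb⟩ => ⟨m, ⟨hs, ha⟩, hb⟩, fun ⟨m, ⟨hs, ha⟩, hb⟩ => ⟨hs, m, ha, hb⟩⟩

theorem IsWalk.append {u m v : G.V} {a b : List G.E} (ha : G.IsWalk u a m)
    (hb : G.IsWalk m b v) : G.IsWalk u (a ++ b) v :=
  isWalk_append.2 ⟨m, ha, hb⟩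

theorem IsWalk.exists_nodup_subset {u v : G.V} {es : List G.E} (hw : G.IsWalk u es v) :
    ∃ t, G.IsWalk u t v ∧ t.Nodup ∧ t ⊆ es := by
  induction es generalizing u with
  | nil => exact ⟨[], hw, List.nodup_nil, List.Subset.refl _⟩
  | cons e es ih =>
    obtain ⟨hsrc, hw⟩ := hw
    obtain ⟨t, ht, htnd, htsub⟩ := ih hw
    by_cases he : e ∈ t
    · -- `t` returns through `e`: cut off the loop before that visit
      obtain ⟨t₁, t₂, rfl⟩ := List.append_of_mem he
      obtain ⟨_, -, _, ht₂⟩ := isWalk_append.1 ht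
      refine ⟨e :: t₂, ⟨hsrc, ht₂⟩, (List.nodup_append.1 htnd).2.1, ?_⟩
      exact List.cons_subset_cons e fun x hx =>
        htsub (List.mem_append_right _ (List.mem_cons_of_mem _ hx))
    · exact ⟨e :: t, ⟨hsrc, ht⟩, htnd.cons he, List.cons_subset_cons e htsub⟩

theorem StronglyConnectedAvoiding.exists_trail {S : Set G.E} (h : G.StronglyConnectedAvoiding S)
    (u v : G.V) : ∃ t, G.IsWalk u t v ∧ t.Nodup ∧ ∀ e ∈ t, e ∉ S := by
  obtain ⟨es, hw, hav⟩ := h u v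
  obtain ⟨t, ht, htnd, htsub⟩ := hw.exists_nodup_subset
  exact ⟨t, ht, htnd, fun e he => hav e (htsub he)⟩

theorem StronglyConnectedAvoiding.exists_trail_through {S : Set G.E} {a : G.E}
    (h : G.StronglyConnectedAvoiding (insert a S)) (ha : a ∉ S) (v : G.V) :
    ∃ t, G.IsWalk v t (G.tgt a) ∧ t.Nodup ∧ a ∈ t ∧ ∀ e ∈ t, e ∉ S := by
  obtain ⟨t, ht, htnd, htav⟩ := h.exists_trail v (G.src a)
  refine ⟨t ++ [a], ht.append ⟨rfl, rfl⟩,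
    htnd.append (List.nodup_singleton a) fun x hx hxa =>
      htav x hx (List.mem_singleton.1 hxa ▸ Set.mem_insert a S), by simp, ?_⟩
  simp only [List.mem_append, List.mem_singleton]
  rintro e (he | rfl)
  · exact fun heS => htav e he (Set.mem_insert_of_mem a heS)
  · exact ha

theorem InfinitelyConnected.exists_trail_covering (h : G.InfinitelyConnected) (w : G.V)
    {S : Set G.E} (hS : S.Finite) : ∃ es v, G.IsWalk w es v ∧ es.Nodup ∧ ∀ e ∈ S, e ∈ es := by
  induction S, hS using Set.Finite.induction_on with
  | empty => exact ⟨[], w, rfl, List.nodup_nil, by simp⟩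
  | @insert a S _ _ ih =>
    obtain ⟨es, v, hw, hnd, hcov⟩ := ih
    by_cases ha : a ∈ es
    · exact ⟨es, v, hw, hnd, Set.forall_mem_insert.2 ⟨ha, hcov⟩⟩
    obtain ⟨t, ht, htnd, hat, htav⟩ :=
      (h.2 _ (es.finite_toSet.insert a)).exists_trail_through (S := {x | x ∈ es}) ha v
    refine ⟨es ++ t, G.tgt a, hw.append ht, hnd.append htnd fun x hx hxt => htav x hxt hx, ?_⟩
    rw [Set.forall_mem_insert]
    exact ⟨List.mem_append_right _ hat, fun e he => List.mem_append_left _ (hcov e he)⟩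

end MultiDigraph

/-- An infinitely connected directed multigraph is Eulerian. -/
theorem infinitelyConnected_isEulerian (G : MultiDigraph) [Nonempty G.V]
    (h : G.InfinitelyConnected) : G.IsEulerian := by
  intro S hS
  obtain ⟨w⟩ := ‹Nonempty G.V›
  obtain ⟨es, v, hw, hnd, hcov⟩ := h.exists_trail_covering w hS
  obtain ⟨t, ht, htnd, htav⟩ := (h.2 _ es.finite_toSet).exists_trail v w
  exact ⟨w, es ++ t, hw.append ht, hnd.append htnd fun x hx hxt => htav x hxt hx,
    fun e he => List.mem_append_left _ (hcov e he)⟩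
end

section
/- In a directed multigraph, if there exists a closed path from a vertex v through each edge of a finite edge set S (an Eulerian circuit on S exists for every finite S), then for every finite S the graph restricted to edges outside S still connects the endpoints of removed edges; in particular an Eulerian directed multigraph (in the sense that every finite edge set lies on some circuit) is strongly connected on the subgraph of vertices incident to edges. -/
lemma MultiDigraph.walk_append (G : MultiDigraph) :
    ∀ (es : List G.E) (u v w : G.V) (fs : List G.E),
      G.IsWalk u es v → G.IsWalk v fs w → G.IsWalk u (es ++ fs) w := by
  intro es
  induction es with
  | nil => intro u v w fs h1 h2; cases h1; simpa using h2
  | cons e es ih =>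
      intro u v w fs h1 h2
      exact ⟨h1.1, ih _ _ _ _ h1.2 h2⟩

lemma MultiDigraph.walk_split (G : MultiDigraph) :
    ∀ (es : List G.E) (u v : G.V) (e : G.E), e ∈ es → G.IsWalk u es v →
      ∃ p q, es = p ++ e :: q ∧ G.IsWalk u p (G.src e) ∧ G.IsWalk (G.tgt e) q v := by
  intro es
  induction es with
  | nil => intro u v e he; simp at he
  | cons f es ih =>
      intro u v e he hw
      rcases List.mem_cons.mp he with rfl | he'
      · exact ⟨[], es, rfl, hw.1.symm, hw.2⟩
      · obtain ⟨p, q, rfl, h1, h2⟩ := ih _ _ e he' hw.2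
        exact ⟨f :: p, q, rfl, ⟨hw.1, h1⟩, h2⟩

/-- From a closed walk at `v` containing an edge incident to `x`, get walks `v → x` and `x → v`. -/
lemma MultiDigraph.closed_to_incident (G : MultiDigraph) {v x : G.V} {es : List G.E} {e : G.E}
    (he : e ∈ es) (hw : G.IsWalk v es v) (hx : G.src e = x ∨ G.tgt e = x) :
    (∃ p, G.IsWalk v p x) ∧ (∃ q, G.IsWalk x q v) := by
  obtain ⟨p, q, _, h1, h2⟩ := G.walk_split es v v e he hw
  rcases hx with rfl | rfl
  · exact ⟨⟨p, h1⟩, ⟨e :: q, rfl, h2⟩⟩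
  · exact ⟨⟨p ++ [e], G.walk_append p _ _ _ [e] h1 ⟨rfl, rfl⟩⟩, ⟨q, h2⟩⟩

/-- An Eulerian directed multigraph is strongly connected on the subgraph of vertices
incident to at least one edge. -/
theorem eulerian_strongly_connected_on_incident (G : MultiDigraph)
    (h : G.IsEulerian) :
    ∀ u w : G.V,
      (∃ e : G.E, G.src e = u ∨ G.tgt e = u) →
      (∃ e : G.E, G.src e = w ∨ G.tgt e = w) →
      ∃ es : List G.E, G.IsWalk u es w := by
  rintro u w ⟨e1, he1⟩ ⟨e2, he2⟩
  obtain ⟨v, es, hw, -, hmem⟩ := h {e1, e2} ((Set.finite_singleton e2).insert e1)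
  have h1 := G.closed_to_incident (hmem e1 (by simp)) hw he1
  have h2 := G.closed_to_incident (hmem e2 (by simp)) hw he2
  obtain ⟨q, hq⟩ := h1.2
  obtain ⟨p, hp⟩ := h2.1
  exact ⟨q ++ p, G.walk_append _ _ _ _ _ hq hp⟩
end
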